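/- Let T be a finite TD-unmixed balanced tree with vertex set V. Then there exists a simplicial complex Δ on the vertex set V_even(T) such that Δ is an unmixed simplicial tree (or a simplex, or the empty complex) and N_odd(T) = F(Δ), the facet ideal of Δ. Concretely, when height(T)=3 one may take Δ to be the complex whose facets are the sets N(v) for v ∈ V_odd(T). -/

import Mathlib

open scoped Classical

section GraphDefs

variable {V : Type} (G : SimpleGraph V)

/-- A leaf is a vertex of degree 1. -/
def IsLeafVx (v : V) : Prop := (G.neighborSet v).ncard = 1

/-- The height of a vertex: the minimum distance to a leaf in its connected
component (`0` if there is no leaf reachable from it, e.g. for isolated vertices). -/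
noncomputable def heightVx (v : V) : ℕ :=
  sInf {n | ∃ l, IsLeafVx G l ∧ G.Reachable v l ∧ G.dist v l = n}

/-- The height of a graph: the maximum height of a vertex. -/
noncomputable def heightGr : ℕ := sSup (Set.range (heightVx G))

/-- A graph is balanced if no two adjacent vertices have the same height. -/
def IsBalanced : Prop := ∀ u w, G.Adj u w → heightVx G u ≠ heightVx G w

/-- The open neighborhood of a set of vertices. -/
def nbhd (S : Set V) : Set V := {u | ∃ v ∈ S, G.Adj v u}

/-- A total dominating set: `N(S) = V`. -/
def IsTDSet (S : Set V) : Prop := nbhd G S = Set.univ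

/-- A minimal total dominating set. -/
def IsMinTDSet (S : Set V) : Prop := IsTDSet G S ∧ ∀ S' ⊂ S, ¬ IsTDSet G S'

/-- A graph is TD-unmixed if all of its minimal total dominating sets have
the same cardinality. -/
def TDUnmixed : Prop :=
  ∀ S₁ S₂ : Set V, IsMinTDSet G S₁ → IsMinTDSet G S₂ → S₁.ncard = S₂.ncard

/-- A forest is TD-unmixed if every connected component is TD-unmixed. -/
def ComponentwiseTDUnmixed : Prop :=
  ∀ c : G.ConnectedComponent, TDUnmixed (G.induce c.supp)

end GraphDefs

section GVDDefs

/-- The squarefree monomial whose support is the finite set `s`. -/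
noncomputable def sqMono (k : Type) [Field k] {σ : Type} (s : Finset σ) : MvPolynomial σ k :=
  ∏ i ∈ s, MvPolynomial.X i

/-- The squarefree monomial ideal generated by the monomials with supports in `F`. -/
noncomputable def sqSpan (k : Type) [Field k] {σ : Type} (F : Set (Finset σ)) :
    Ideal (MvPolynomial σ k) :=
  Ideal.span {m | ∃ s ∈ F, m = sqMono k s}

/-- The height of a prime ideal. -/
noncomputable def primeHt {R : Type*} [CommRing R] (P : Ideal R) (hP : P.IsPrime) : ℕ∞ :=
  Order.height (⟨P, hP⟩ : PrimeSpectrum R)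

/-- An ideal is unmixed if all of its minimal primes have the same height. -/
def UnmixedIdeal {R : Type*} [CommRing R] (I : Ideal R) : Prop :=
  ∀ P Q : Ideal R, ∀ hP : P ∈ I.minimalPrimes, ∀ hQ : Q ∈ I.minimalPrimes,
    primeHt P hP.1.1 = primeHt Q hQ.1.1

/-- View a finset of `σ` as a finset of `{x : σ // x ≠ y}` (dropping `y`). -/
noncomputable def dropVar {σ : Type} (y : σ) (s : Finset σ) : Finset {x : σ // x ≠ y} :=
  s.subtype (· ≠ y)

/-- Supports of the generators of `N_{y,I}`: the given generators not divisible by `y`. -/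
def NFam {σ : Type} (y : σ) (F : Set (Finset σ)) : Set (Finset σ) := {s ∈ F | y ∉ s}

/-- Supports of the generators of `C_{y,I}`: the given generators with `y` divided out
(together with the generators not divisible by `y`). -/
noncomputable def CFam {σ : Type} (y : σ) (F : Set (Finset σ)) : Set (Finset σ) :=
  (fun s => s.erase y) '' F

/-- A squarefree monomial ideal `I` is geometrically vertex decomposable if it is unmixed
and either (1) `I = ⟨1⟩` or `I` is generated by a subset of the variables, or (2) there is
a set of squarefree monomial generators of `I` and a variable `y` such that
`I = C_{y,I} ∩ (N_{y,I} + ⟨y⟩)` and both `C_{y,I}` and `N_{y,I}` are geometrically vertex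
decomposable in the polynomial ring omitting the variable `y`. -/
inductive IsGVD (k : Type) [Field k] : (σ : Type) → Ideal (MvPolynomial σ k) → Prop where
  | base (σ : Type) (I : Ideal (MvPolynomial σ k)) (hunm : UnmixedIdeal I)
      (h : I = ⊤ ∨ ∃ W : Set σ, I = Ideal.span (MvPolynomial.X '' W)) : IsGVD k σ I
  | step (σ : Type) (I : Ideal (MvPolynomial σ k)) (hunm : UnmixedIdeal I)
      (F : Set (Finset σ)) (hgen : I = sqSpan k F) (y : σ)
      (hdec : I = sqSpan k (CFam y F) ⊓ (sqSpan k (NFam y F) ⊔ Ideal.span {MvPolynomial.X y}))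
      (hC : IsGVD k {x : σ // x ≠ y} (sqSpan k (dropVar y '' CFam y F)))
      (hN : IsGVD k {x : σ // x ≠ y} (sqSpan k (dropVar y '' NFam y F))) :
      IsGVD k σ I

end GVDDefs

section ONIDefs

variable {V : Type} [Fintype V]

/-- The open neighborhood of a vertex, as a finset. -/
noncomputable def nbrFinset (G : SimpleGraph V) (v : V) : Finset V :=
  (Set.toFinite (G.neighborSet v)).toFinset

/-- The odd-open neighborhood ideal of a (balanced) graph: generated by the monomials
`X_{N(v)}` for the vertices `v` of odd height. -/
noncomputable def oddONI (k : Type) [Field k] (G : SimpleGraph V) : Ideal (MvPolynomial V k) :=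
  sqSpan k {s | ∃ v : V, Odd (heightVx G v) ∧ s = nbrFinset G v}

end ONIDefs

section SimplicialDefs

variable {W : Type}

/-- A collection of finsets is downward closed (i.e. is a simplicial complex). -/
def DownClosed (Δ : Set (Finset W)) : Prop := ∀ s ∈ Δ, ∀ t ⊆ s, t ∈ Δ

/-- The facets (maximal faces) of a simplicial complex. -/
def facetsCx (Δ : Set (Finset W)) : Set (Finset W) :=
  {s ∈ Δ | ∀ t ∈ Δ, s ⊆ t → s = t}

/-- A vertex cover of a simplicial complex: a set of vertices meeting every facet. -/
def IsVertexCoverCx (Δ : Set (Finset W)) (S : Set W) : Prop :=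
  ∀ F ∈ facetsCx Δ, ∃ w ∈ S, w ∈ F

/-- A minimal vertex cover. -/
def IsMinVertexCoverCx (Δ : Set (Finset W)) (S : Set W) : Prop :=
  IsVertexCoverCx Δ S ∧ ∀ S' ⊂ S, ¬ IsVertexCoverCx Δ S'

/-- A simplicial complex is unmixed if all of its minimal vertex covers have the same
cardinality. -/
def UnmixedCx (Δ : Set (Finset W)) : Prop :=
  ∀ S₁ S₂ : Set W, IsMinVertexCoverCx Δ S₁ → IsMinVertexCoverCx Δ S₂ →
    S₁.ncard = S₂.ncard

/-- A simplicial complex is connected if any two of its vertices are joined by a chain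
of pairwise intersecting facets. -/
def ConnectedCx (Δ : Set (Finset W)) : Prop :=
  ∀ u v : W, (∃ s ∈ Δ, u ∈ s) → (∃ s ∈ Δ, v ∈ s) →
    ∃ (n : ℕ) (f : Fin (n + 1) → Finset W),
      (∀ i, f i ∈ facetsCx Δ) ∧ u ∈ f 0 ∧ v ∈ f (Fin.last n) ∧
      ∀ i : Fin n, ((f i.castSucc : Set W) ∩ (f i.succ : Set W)).Nonempty

/-- A simplicial leaf: a facet `L` such that `L` is the only facet, or there is a facet
`G ≠ L` (a joint) with `L ∩ F ⊆ L ∩ G` for every facet `F ≠ L`. -/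
def IsSimplicialLeaf (Δ : Set (Finset W)) (L : Finset W) : Prop :=
  L ∈ facetsCx Δ ∧
    (facetsCx Δ = {L} ∨
      ∃ G ∈ facetsCx Δ, G ≠ L ∧ ∀ F ∈ facetsCx Δ, F ≠ L →
        (L : Set W) ∩ (F : Set W) ⊆ (L : Set W) ∩ (G : Set W))

/-- The simplicial complex generated by a collection of finsets. -/
def genBy (Fs : Set (Finset W)) : Set (Finset W) := {t | ∃ F ∈ Fs, t ⊆ F}

/-- A simplicial tree: a connected simplicial complex such that removing any nonempty
set of facets leaves a complex that is empty or has a simplicial leaf. -/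
def IsSimplicialTree (Δ : Set (Finset W)) : Prop :=
  ConnectedCx Δ ∧
    ∀ S ⊆ facetsCx Δ, S.Nonempty →
      (genBy (facetsCx Δ \ S) = ∅ ∨ ∃ L, IsSimplicialLeaf (genBy (facetsCx Δ \ S)) L)

/-- The facet ideal of a simplicial complex. -/
noncomputable def facetIdeal (k : Type) [Field k] (Δ : Set (Finset W)) :
    Ideal (MvPolynomial W k) :=
  Ideal.span {m | ∃ F ∈ facetsCx Δ, m = sqMono k F}

end SimplicialDefs

/-!
Heights alternate in parity along the edges of a balanced tree, so the tree is bipartite with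
sides `V_even` and `V_odd` and the neighbourhoods of odd vertices consist of even vertices. An odd
vertex has at least two neighbours while two vertices of a tree share at most one, so these
neighbourhoods form an antichain: they are precisely the facets of the complex `Δ` they generate,
whence `N_odd(T) = F(Δ)`.

`Δ` is connected since consecutive odd vertices on a path share a neighbour. Removing facets
leaves the complex generated by the neighbourhoods of fewer odd vertices; there the neighbourhood
of an odd vertex farthest from a fixed root meets every other facet at most in the parent of that
vertex, so it is a simplicial leaf.

The minimal vertex covers of `Δ` are the minimal sets dominating `V_odd`. Adjoining to each of
them one fixed minimal subset of `V_odd` dominating `V_even` gives a minimal total dominating set,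
so TD-unmixedness of `T` makes all of them equally large.
-/

open SimpleGraph

section Simplicial

variable {W : Type} {F : Set (Finset W)}

lemma downClosed_genBy (F : Set (Finset W)) : DownClosed (genBy F) := by
  rintro s ⟨u, hu, hsu⟩ t hts
  exact ⟨u, hu, hts.trans hsu⟩

lemma genBy_empty : genBy (∅ : Set (Finset W)) = ∅ := by
  simp [genBy]

lemma facetsCx_genBy (hF : IsAntichain (· ⊆ ·) F) : facetsCx (genBy F) = F := by
  ext s
  constructor
  · rintro ⟨⟨t, ht, hst⟩, hmax⟩
    rwa [hmax t ⟨t, ht, subset_rfl⟩ hst]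
  · intro hs
    refine ⟨⟨s, hs, subset_rfl⟩, ?_⟩
    rintro t ⟨u, hu, htu⟩ hst
    obtain rfl : s = u := hF.eq hs hu (hst.trans htu)
    exact hst.antisymm htu

lemma facetIdeal_genBy (k : Type) [Field k] (hF : IsAntichain (· ⊆ ·) F) :
    facetIdeal k (genBy F) = sqSpan k F := by
  rw [facetIdeal, facetsCx_genBy hF, sqSpan]

lemma isMinVertexCoverCx_iff_minimal {Δ : Set (Finset W)} {S : Set W} :
    IsMinVertexCoverCx Δ S ↔ Minimal (IsVertexCoverCx Δ) S := by
  rw [minimal_iff_forall_lt]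
  rfl

/-- A facet through `c`, if there is one, serves as the joint. -/
lemma isSimplicialLeaf_genBy_of_inter_subset_singleton (hF : IsAntichain (· ⊆ ·) F)
    {L : Finset W} (hL : L ∈ F) (c : W)
    (hc : ∀ M ∈ F, M ≠ L → (L : Set W) ∩ M ⊆ {c}) : IsSimplicialLeaf (genBy F) L := by
  rw [IsSimplicialLeaf, facetsCx_genBy hF]
  refine ⟨hL, ?_⟩
  by_cases hjoint : ∃ J ∈ F, J ≠ L ∧ c ∈ (L : Set W) ∩ J
  · obtain ⟨J, hJ, hJL, hcJ⟩ := hjoint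
    exact .inr ⟨J, hJ, hJL, fun M hM hML ↦ (hc M hM hML).trans (Set.singleton_subset_iff.mpr hcJ)⟩
  push Not at hjoint
  have hdisj : ∀ M ∈ F, M ≠ L → (L : Set W) ∩ M = ∅ := fun M hM hML ↦
    Set.subset_empty_iff.mp fun x hx ↦ hjoint M hM hML (hc M hM hML hx ▸ hx)
  by_cases hsingle : F = {L}
  · exact .inl hsingle
  obtain ⟨J, hJ, hJL⟩ : ∃ J ∈ F, J ≠ L := by
    by_contra! h
    exact hsingle (Set.eq_singleton_iff_unique_mem.mpr ⟨hL, h⟩)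
  exact .inr ⟨J, hJ, hJL, fun M hM hML ↦ by simp [hdisj M hM hML]⟩

end Simplicial

section Domination

variable {V : Type} {G : SimpleGraph V} {s t D S T : Set V}

lemma isMinTDSet_iff_minimal : IsMinTDSet G D ↔ Minimal (IsTDSet G) D := by
  rw [minimal_iff_forall_lt]
  rfl

lemma SimpleGraph.IsBipartiteWith.subset_nbhd_inter (h : G.IsBipartiteWith s t)
    (hD : t ⊆ nbhd G D) : t ⊆ nbhd G (D ∩ s) := by
  intro v hv
  obtain ⟨w, hw, hwv⟩ := hD hv
  exact ⟨w, ⟨hw, h.mem_of_mem_adj' hv hwv⟩, hwv⟩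

lemma SimpleGraph.IsBipartiteWith.subset_of_minimal (h : G.IsBipartiteWith s t)
    (hS : Minimal (fun S ↦ t ⊆ nbhd G S) S) : S ⊆ s :=
  fun _ hx ↦ (hS.le_of_le (h.subset_nbhd_inter hS.prop) Set.inter_subset_left hx).2

/-- Each half of a smaller total dominating set would still dominate its side, contradicting the
minimality of `S` or of `T`. -/
lemma SimpleGraph.IsBipartiteWith.isMinTDSet_union (h : G.IsBipartiteWith s t)
    (hst : s ∪ t = Set.univ) (hS : Minimal (fun S ↦ t ⊆ nbhd G S) S)
    (hT : Minimal (fun T ↦ T ⊆ t ∧ s ⊆ nbhd G T) T) : IsMinTDSet G (S ∪ T) := by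
  have hSs := h.subset_of_minimal hS
  rw [isMinTDSet_iff_minimal]
  refine ⟨Set.eq_univ_of_forall fun v ↦ ?_, fun D hD hDST ↦ ?_⟩
  · rcases (hst ▸ Set.mem_univ v : v ∈ s ∪ t) with hv | hv
    · obtain ⟨w, hw, hwv⟩ := hT.prop.2 hv
      exact ⟨w, .inr hw, hwv⟩
    · obtain ⟨w, hw, hwv⟩ := hS.prop hv
      exact ⟨w, .inl hw, hwv⟩
  have hDuniv : ∀ A, A ⊆ nbhd G D := fun A ↦ hD ▸ Set.subset_univ A
  have hSD : S ⊆ D ∩ s := by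
    refine hS.le_of_le (h.subset_nbhd_inter (hDuniv t)) fun x ⟨hxD, hxs⟩ ↦ ?_
    exact (hDST hxD).resolve_right fun hxT ↦ Set.disjoint_left.mp h.disjoint hxs (hT.prop.1 hxT)
  have hTD : T ⊆ D ∩ t := by
    refine hT.le_of_le ⟨Set.inter_subset_right, h.symm.subset_nbhd_inter (hDuniv s)⟩
      fun x ⟨hxD, hxt⟩ ↦ ?_
    exact (hDST hxD).resolve_left fun hxS ↦ Set.disjoint_left.mp h.disjoint (hSs hxS) hxt
  exact Set.union_subset (hSD.trans Set.inter_subset_left) (hTD.trans Set.inter_subset_left)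

lemma TDUnmixed.ncard_eq_of_isBipartiteWith [Finite V] (hunm : TDUnmixed G)
    (h : G.IsBipartiteWith s t) (hst : s ∪ t = Set.univ)
    (hT : Minimal (fun T ↦ T ⊆ t ∧ s ⊆ nbhd G T) T) {S₁ S₂ : Set V}
    (hS₁ : Minimal (fun S ↦ t ⊆ nbhd G S) S₁) (hS₂ : Minimal (fun S ↦ t ⊆ nbhd G S) S₂) :
    S₁.ncard = S₂.ncard := by
  have hcard : ∀ S, Minimal (fun S ↦ t ⊆ nbhd G S) S → (S ∪ T).ncard = S.ncard + T.ncard :=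
    fun S hS ↦ Set.ncard_union_eq (h.disjoint.mono (h.subset_of_minimal hS) hT.prop.1)
  have := hunm _ _ (h.isMinTDSet_union hst hS₁ hT) (h.isMinTDSet_union hst hS₂ hT)
  rw [hcard S₁ hS₁, hcard S₂ hS₂] at this
  omega

end Domination

section Heights

variable {V : Type} {G : SimpleGraph V} {u v w : V}

lemma heightVx_le_heightVx_add_one_of_adj (h : G.Adj u w) : heightVx G u ≤ heightVx G w + 1 := by
  by_cases hne : {n | ∃ l, IsLeafVx G l ∧ G.Reachable w l ∧ G.dist w l = n}.Nonempty
  · obtain ⟨l, hl, hr, hd⟩ := Nat.sInf_mem hne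
    calc heightVx G u ≤ G.dist u l := Nat.sInf_le ⟨l, hl, h.reachable.trans hr, rfl⟩
      _ ≤ G.dist u w + G.dist w l := h.reachable.dist_triangle_left l
      _ = heightVx G w + 1 := by rw [dist_eq_one_iff_adj.mpr h, hd, add_comm]; rfl
  · have hu : {n | ∃ l, IsLeafVx G l ∧ G.Reachable u l ∧ G.dist u l = n} = ∅ :=
      Set.not_nonempty_iff_eq_empty.mp fun ⟨_, l, hl, hr, _⟩ ↦
        hne ⟨_, l, hl, h.symm.reachable.trans hr, rfl⟩
    simp [heightVx, hu]

lemma IsBalanced.isBipartiteWith (hbal : IsBalanced G) :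
    G.IsBipartiteWith {v | Even (heightVx G v)} {v | Odd (heightVx G v)} where
  disjoint := Set.disjoint_left.mpr fun _ he ho ↦ Nat.not_even_iff_odd.mpr ho he
  mem_of_adj u w h := by
    have h₁ := heightVx_le_heightVx_add_one_of_adj h
    have h₂ := heightVx_le_heightVx_add_one_of_adj h.symm
    have h₃ := hbal u w h
    rcases (by omega : heightVx G u = heightVx G w + 1 ∨ heightVx G w = heightVx G u + 1)
      with e | e <;> simp only [Set.mem_ofPred_eq, e, Nat.even_add_one,
        ← Nat.not_even_iff_odd] <;> tauto

lemma heightVx_eq_zero_of_isLeafVx (hv : IsLeafVx G v) : heightVx G v = 0 :=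
  Nat.eq_zero_of_le_zero (Nat.sInf_le ⟨v, hv, .refl v, dist_self⟩)

lemma exists_adj_of_heightVx_ne_zero (hv : heightVx G v ≠ 0) : ∃ w, G.Adj v w := by
  obtain ⟨l, -, hr, hd⟩ := Nat.sInf_mem (Nat.nonempty_of_pos_sInf (Nat.pos_of_ne_zero hv))
  have hvl : v ≠ l := by
    rintro rfl
    exact hv (hd.symm.trans dist_self)
  obtain ⟨p⟩ := hr
  exact ⟨_, p.adj_snd (p.not_nil_of_ne hvl)⟩

lemma one_lt_card_nbrFinset_of_heightVx_ne_zero [Fintype V] (hv : heightVx G v ≠ 0) :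
    1 < (nbrFinset G v).card := by
  obtain ⟨w, hw⟩ := exists_adj_of_heightVx_ne_zero hv
  have hpos : (G.neighborSet v).ncard ≠ 0 := Set.ncard_ne_zero_of_mem hw
  have hleaf : (G.neighborSet v).ncard ≠ 1 := fun h ↦ hv (heightVx_eq_zero_of_isLeafVx h)
  rw [nbrFinset, ← Set.ncard_eq_toFinset_card]
  omega

end Heights

section NeighborhoodComplex

variable {V : Type} {G : SimpleGraph V} {s t : Set V}

lemma mem_nbrFinset [Fintype V] {v x : V} : x ∈ nbrFinset G v ↔ G.Adj v x := by
  simp [nbrFinset]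

lemma SimpleGraph.IsAcyclic.eq_of_adj_of_adj (hG : G.IsAcyclic) {u v x y : V} (huv : u ≠ v)
    (hux : G.Adj u x) (hxv : G.Adj x v) (huy : G.Adj u y) (hyv : G.Adj y v) : x = y := by
  have hpx : (Walk.cons hux (Walk.cons hxv .nil)).IsPath := by simp [hux.ne, hxv.ne, huv]
  have hpy : (Walk.cons huy (Walk.cons hyv .nil)).IsPath := by simp [huy.ne, hyv.ne, huv]
  simpa using congrArg (fun p : G.Path u v ↦ p.1.snd)
    ((hG.subsingleton_path u v).elim ⟨_, hpx⟩ ⟨_, hpy⟩)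

lemma SimpleGraph.IsAcyclic.isAntichain_image_nbrFinset [Fintype V] (hG : G.IsAcyclic)
    {B : Set V} (hB : ∀ v ∈ B, 1 < (nbrFinset G v).card) :
    IsAntichain (· ⊆ ·) (nbrFinset G '' B) := by
  rintro _ ⟨u, hu, rfl⟩ _ ⟨v, -, rfl⟩ hne hsub
  obtain ⟨x, hx, y, hy, hxy⟩ := Finset.one_lt_card.mp (hB u hu)
  have hvx := mem_nbrFinset.mp (hsub hx)
  have hvy := mem_nbrFinset.mp (hsub hy)
  rw [mem_nbrFinset] at hx hy
  exact hxy (hG.eq_of_adj_of_adj (fun huv ↦ hne (congrArg (nbrFinset G) huv))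
    hx hvx.symm hy hvy.symm)

lemma SimpleGraph.IsTree.eq_penultimate_of_adj_of_dist_lt (hG : G.IsTree) {r x a : V}
    {p : G.Walk r x} (hp : p.IsPath) (hadj : G.Adj a x) (hd : G.dist r a < G.dist r x) :
    a = p.penultimate := by
  classical
  obtain ⟨q, hq, hql⟩ := (hG.connected r a).exists_path_of_dist
  have hx : x ∉ q.support := fun hx ↦ by
    have := dist_le (q.takeUntil x hx)
    have := q.length_takeUntil_le_length hx
    omega
  exact hG.isAcyclic.eq_penultimate_of_adj_end hp hadj.symm
    (hG.isAcyclic.mem_support_of_ne_mem_support_of_adj_of_isPath hp hq hadj.symm hx)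

/-- Otherwise `x` is a child of `v`, and then `u` and `v` would both be parents of `x`. -/
lemma SimpleGraph.IsTree.dist_lt_of_adj_of_adj (hG : G.IsTree) {r u v x : V} (huv : u ≠ v)
    (hd : G.dist r u ≤ G.dist r v) (hvx : G.Adj v x) (hux : G.Adj u x) :
    G.dist r x < G.dist r v := by
  obtain ⟨p, hp, -⟩ := (hG.connected r x).exists_path_of_dist
  rcases hG.dist_eq_dist_add_one_of_adj r hvx with h | h
  · omega
  rcases hG.dist_eq_dist_add_one_of_adj r hux with h' | h'
  · omega
  exact absurd ((hG.eq_penultimate_of_adj_of_dist_lt hp hux (by omega)).trans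
    (hG.eq_penultimate_of_adj_of_dist_lt hp hvx (by omega)).symm) huv

lemma SimpleGraph.IsTree.exists_isSimplicialLeaf_genBy [Fintype V] (hG : G.IsTree)
    {B : Set V} (hB : ∀ v ∈ B, 1 < (nbrFinset G v).card) (hne : B.Nonempty) :
    ∃ L, IsSimplicialLeaf (genBy (nbrFinset G '' B)) L := by
  obtain ⟨r, hr⟩ := hne
  obtain ⟨v, hv, hvmax⟩ := Set.exists_max_image B (G.dist r) B.toFinite ⟨r, hr⟩
  obtain ⟨p, hp, -⟩ := (hG.connected r v).exists_path_of_dist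
  refine ⟨_, isSimplicialLeaf_genBy_of_inter_subset_singleton
    (hG.isAcyclic.isAntichain_image_nbrFinset hB) ⟨v, hv, rfl⟩ p.penultimate ?_⟩
  rintro _ ⟨w, hw, rfl⟩ hwv z ⟨hzv, hzw⟩
  rw [Finset.mem_coe, mem_nbrFinset] at hzv hzw
  exact hG.eq_penultimate_of_adj_of_dist_lt hp hzv.symm
    (hG.dist_lt_of_adj_of_adj (ne_of_apply_ne _ hwv) (hvmax w hw) hzv hzw)

lemma SimpleGraph.IsBipartiteWith.exists_nbrFinset_chain [Fintype V]
    (h : G.IsBipartiteWith s t) :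
    ∀ {u v : V}, G.Walk u v → u ∈ t → v ∈ t →
      ∃ (n : ℕ) (f : Fin (n + 1) → Finset V),
        (∀ i, f i ∈ nbrFinset G '' t) ∧ f 0 = nbrFinset G u ∧ f (Fin.last n) = nbrFinset G v ∧
        ∀ i : Fin n, ((f i.castSucc : Set V) ∩ (f i.succ : Set V)).Nonempty
  | _, _, .nil, hu, _ => ⟨0, fun _ ↦ nbrFinset G _, fun _ ↦ ⟨_, hu, rfl⟩, rfl, rfl, Fin.elim0⟩
  | _, _, .cons hua .nil, hu, hv =>
    absurd hv (Set.disjoint_left.mp h.disjoint (h.symm.mem_of_mem_adj hu hua))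
  | _, _, .cons hua (.cons hab q), hu, hv => by
    obtain ⟨n, f, hf, hf0, hflast, hfint⟩ :=
      h.exists_nbrFinset_chain q (h.mem_of_mem_adj (h.symm.mem_of_mem_adj hu hua) hab) hv
    refine ⟨n + 1, Fin.cons (nbrFinset G _) f, Fin.cases ⟨_, hu, rfl⟩ hf, rfl, ?_,
      Fin.cases ?_ fun i ↦ ?_⟩
    · rw [← Fin.succ_last, Fin.cons_succ, hflast]
    · simp only [Fin.castSucc_zero, Fin.cons_zero, Fin.succ_zero_eq_one, Fin.cons_one, hf0]
      exact ⟨_, mem_nbrFinset.mpr hua, mem_nbrFinset.mpr hab.symm⟩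
    · simpa only [← Fin.succ_castSucc, Fin.cons_succ] using hfint i

lemma SimpleGraph.IsBipartiteWith.connectedCx_genBy [Fintype V] (h : G.IsBipartiteWith s t)
    (hconn : G.Connected) (hanti : IsAntichain (· ⊆ ·) (nbrFinset G '' t)) :
    ConnectedCx (genBy (nbrFinset G '' t)) := by
  rintro x y ⟨_, ⟨_, ⟨u, hu, rfl⟩, hxu⟩, hx⟩ ⟨_, ⟨_, ⟨v, hv, rfl⟩, hyv⟩, hy⟩
  obtain ⟨n, f, hf, hf0, hflast, hfint⟩ := h.exists_nbrFinset_chain (hconn u v).some hu hv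
  exact ⟨n, f, fun i ↦ (facetsCx_genBy hanti).symm ▸ hf i, hf0 ▸ hxu hx, hflast ▸ hyv hy,
    hfint⟩

lemma SimpleGraph.IsBipartiteWith.mem_of_mem_genBy [Fintype V] (h : G.IsBipartiteWith s t)
    {F : Finset V} (hF : F ∈ genBy (nbrFinset G '' t)) {v : V} (hv : v ∈ F) : v ∈ s := by
  obtain ⟨_, ⟨u, hu, rfl⟩, hFu⟩ := hF
  exact h.symm.mem_of_mem_adj hu (mem_nbrFinset.mp (hFu hv))

lemma SimpleGraph.IsTree.isSimplicialTree_genBy [Fintype V] (hG : G.IsTree)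
    (h : G.IsBipartiteWith s t) (ht : ∀ v ∈ t, 1 < (nbrFinset G v).card) :
    IsSimplicialTree (genBy (nbrFinset G '' t)) := by
  have hanti := hG.isAcyclic.isAntichain_image_nbrFinset ht
  refine ⟨h.connectedCx_genBy hG.connected hanti, fun S _ _ ↦ ?_⟩
  rw [facetsCx_genBy hanti, ← Set.image_sdiff_preimage]
  rcases (t \ nbrFinset G ⁻¹' S).eq_empty_or_nonempty with he | hne
  · rw [he, Set.image_empty, genBy_empty]
    exact .inl rfl
  · exact .inr (hG.exists_isSimplicialLeaf_genBy (fun v hv ↦ ht v hv.1) hne)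

lemma isVertexCoverCx_genBy [Fintype V] {B : Set V}
    (hanti : IsAntichain (· ⊆ ·) (nbrFinset G '' B)) :
    IsVertexCoverCx (genBy (nbrFinset G '' B)) = (B ⊆ nbhd G ·) := by
  ext S
  simp only [IsVertexCoverCx, facetsCx_genBy hanti, Set.forall_mem_image, mem_nbrFinset,
    Set.subset_def, nbhd, Set.mem_ofPred_eq, G.adj_comm]

lemma SimpleGraph.IsTree.unmixedCx_genBy [Fintype V] (hG : G.IsTree)
    (h : G.IsBipartiteWith s t) (hst : s ∪ t = Set.univ)
    (ht : ∀ v ∈ t, 1 < (nbrFinset G v).card) (hunm : TDUnmixed G) :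
    UnmixedCx (genBy (nbrFinset G '' t)) := by
  intro S₁ S₂ h₁ h₂
  rw [isMinVertexCoverCx_iff_minimal,
    isVertexCoverCx_genBy (hG.isAcyclic.isAntichain_image_nbrFinset ht)] at h₁ h₂
  rcases t.eq_empty_or_nonempty with rfl | ⟨v, hv⟩
  · have hempty : ∀ S, Minimal (fun S ↦ ∅ ⊆ nbhd G S) S → S = ∅ := fun S hS ↦
      Set.subset_empty_iff.mp (hS.le_of_le (Set.empty_subset _) (Set.empty_subset _))
    rw [hempty S₁ h₁, hempty S₂ h₂]
  obtain ⟨x, -, y, -, hxy⟩ := Finset.one_lt_card.mp (ht v hv)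
  have : Nontrivial V := ⟨x, y, hxy⟩
  have hdom : s ⊆ nbhd G t := fun u hu ↦ by
    obtain ⟨w, hw⟩ := hG.connected.preconnected.exists_adj_of_nontrivial u
    exact ⟨w, h.mem_of_mem_adj hu hw, hw.symm⟩
  obtain ⟨T, -, hT⟩ := exists_minimal_le_of_wellFoundedLT (fun T ↦ T ⊆ t ∧ s ⊆ nbhd G T) t
    ⟨subset_rfl, hdom⟩
  exact hunm.ncard_eq_of_isBipartiteWith h hst hT h₁ h₂

end NeighborhoodComplex

/-- **Theorem** (Theorem 5.8): for a finite TD-unmixed balanced tree `T` there is a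
simplicial complex `Δ` on the vertex set `V_even(T)` which is an unmixed simplicial tree
(or a simplex, or the empty complex) with `N_odd(T) = F(Δ)`.  Concretely, when
`height(T) = 3` one may take `Δ` to be the complex generated by the open neighborhoods
`N(v)` of the vertices `v ∈ V_odd(T)`. -/
theorem oddONI_eq_facetIdeal_of_simplicialTree (k : Type) [Field k] {V : Type} [Fintype V]
    (G : SimpleGraph V) (htree : G.IsTree) (hbal : IsBalanced G) (hunm : TDUnmixed G) :
    (∃ Δ : Set (Finset V),
      DownClosed Δ ∧
      (∀ s ∈ Δ, ∀ v ∈ s, Even (heightVx G v)) ∧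
      UnmixedCx Δ ∧
      (IsSimplicialTree Δ ∨ (∃ F : Finset V, Δ = {t | t ⊆ F}) ∨ Δ = ∅ ∨ Δ = {∅}) ∧
      oddONI k G = facetIdeal k Δ) ∧
    (heightGr G = 3 →
      DownClosed (genBy {s | ∃ v : V, Odd (heightVx G v) ∧ s = nbrFinset G v}) ∧
      (∀ s ∈ genBy {s | ∃ v : V, Odd (heightVx G v) ∧ s = nbrFinset G v},
        ∀ v ∈ s, Even (heightVx G v)) ∧
      UnmixedCx (genBy {s | ∃ v : V, Odd (heightVx G v) ∧ s = nbrFinset G v}) ∧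
      IsSimplicialTree (genBy {s | ∃ v : V, Odd (heightVx G v) ∧ s = nbrFinset G v}) ∧
      oddONI k G
        = facetIdeal k (genBy {s | ∃ v : V, Odd (heightVx G v) ∧ s = nbrFinset G v})) := by
  have hbip := hbal.isBipartiteWith
  have hst : {v | Even (heightVx G v)} ∪ {v | Odd (heightVx G v)} = Set.univ :=
    Set.eq_univ_of_forall fun v ↦ Nat.even_or_odd (heightVx G v)
  have hodd : ∀ v ∈ {v | Odd (heightVx G v)}, 1 < (nbrFinset G v).card :=
    fun _ hv ↦ one_lt_card_nbrFinset_of_heightVx_ne_zero hv.pos.ne'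
  have hfam : {s | ∃ v : V, Odd (heightVx G v) ∧ s = nbrFinset G v} =
      nbrFinset G '' {v | Odd (heightVx G v)} := by
    ext
    simp [eq_comm]
  have hideal : oddONI k G = facetIdeal k (genBy (nbrFinset G '' {v | Odd (heightVx G v)})) := by
    rw [oddONI, hfam, facetIdeal_genBy k (htree.isAcyclic.isAntichain_image_nbrFinset hodd)]
  have hfaces : ∀ F ∈ genBy (nbrFinset G '' {v | Odd (heightVx G v)}), ∀ v ∈ F,
      Even (heightVx G v) := fun _ hF _ ↦ hbip.mem_of_mem_genBy hF
  have hunmCx := htree.unmixedCx_genBy hbip hst hodd hunm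
  have htreeCx := htree.isSimplicialTree_genBy hbip hodd
  rw [hfam]
  exact ⟨⟨_, downClosed_genBy _, hfaces, hunmCx, .inl htreeCx, hideal⟩,
    fun _ ↦ ⟨downClosed_genBy _, hfaces, hunmCx, htreeCx, hideal⟩⟩
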